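/- arXiv:1811.01385 — 5 statements merged into one kernel-verified Lean document; each statement's English description precedes it below -/
import Mathlib

section
/- Let ω be a double weight on (0,1) (i.e. ω̂(r) ≤ C ω̂((1+r)/2)) and define ω_*(r) = ∫_r^1 s ω(s) log(s/r) ds for r ∈ (0,1]. Then there exist constants c₁, c₂ > 0 and r₀ ∈ (0,1) such that c₁ (1-r) ω̂(r) ≤ ω_*(r) ≤ c₂ (1-r) ω̂(r) for all r ∈ (r₀, 1). -/
/-!
Since `1 - r/s ≤ log (s/r) ≤ s/r - 1`, the kernel `s log (s/r)` lies between `s - r` and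
`s (s - r)/r` on `(r, 1)`. The upper bound is at most `(1 - r)/r`, which gives
`ω_*(r) ≤ (1 - r)/r · ω̂(r)`. The lower bound is at least `(1 - r)/2` on `((1 + r)/2, 1)`, which
gives `ω_*(r) ≥ (1 - r)/2 · ω̂((1 + r)/2)`, and the doubling condition compares `ω̂((1 + r)/2)`
with `ω̂(r)`.
-/

open Real MeasureTheory Set

/-- `ω̂` in the paper's notation. -/
noncomputable def weightTail (ω : ℝ → ℝ) (r : ℝ) : ℝ := ∫ s in Ioo r 1, ω s

/-- `ω_*` in the paper's notation. -/
noncomputable def weightLogTail (ω : ℝ → ℝ) (r : ℝ) : ℝ :=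
  ∫ s in Ioo r 1, s * ω s * log (s / r)

lemma sub_le_mul_log_div {r s : ℝ} (hr : 0 < r) (hs : 0 < s) : s - r ≤ s * log (s / r) := by
  have h := one_sub_inv_le_log_of_pos (div_pos hs hr)
  rw [inv_div] at h
  calc s - r = s * (1 - r / s) := by field_simp
    _ ≤ s * log (s / r) := mul_le_mul_of_nonneg_left h hs.le

lemma mul_log_div_le {r s : ℝ} (hr : 0 < r) (hrs : r ≤ s) (hs : s ≤ 1) :
    s * log (s / r) ≤ (1 - r) / r := by
  have h := log_le_sub_one_of_pos (div_pos (hr.trans_le hrs) hr)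
  calc s * log (s / r) ≤ 1 * (s / r - 1) :=
        mul_le_mul hs h (log_nonneg ((one_le_div hr).2 hrs)) zero_le_one
    _ ≤ (1 - r) / r := by
        rw [one_mul, div_sub_one hr.ne']
        gcongr

section

variable {ω : ℝ → ℝ} {r : ℝ}

lemma weightTail_nonneg (hω : ∀ s ∈ Ioo r 1, 0 ≤ ω s) : 0 ≤ weightTail ω r :=
  setIntegral_nonneg measurableSet_Ioo hω

lemma integrableOn_mul_mul_log_div (hr : 0 < r) (hint : IntegrableOn ω (Ioo r 1)) :
    IntegrableOn (fun s ↦ s * ω s * log (s / r)) (Ioo r 1) := by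
  have hcont : ContinuousOn (fun s ↦ s * log (s / r)) (Icc r 1) := by
    refine continuousOn_id.mul ((continuousOn_id.div_const r).log fun s hs ↦ ?_)
    exact (div_pos (hr.trans_le hs.1) hr).ne'
  have h := hint.mul_continuousOn_of_subset hcont measurableSet_Ioo isCompact_Icc Ioo_subset_Icc_self
  refine h.congr_fun (fun s _ ↦ ?_) measurableSet_Ioo
  ring

lemma weightLogTail_le (hr : 0 < r) (hint : IntegrableOn ω (Ioo r 1))
    (hω : ∀ s ∈ Ioo r 1, 0 ≤ ω s) :
    weightLogTail ω r ≤ (1 - r) / r * weightTail ω r := by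
  rw [weightTail, ← integral_const_mul]
  refine setIntegral_mono_on (integrableOn_mul_mul_log_div hr hint) (hint.const_mul _)
    measurableSet_Ioo fun s hs ↦ ?_
  calc s * ω s * log (s / r) = s * log (s / r) * ω s := by ring
    _ ≤ (1 - r) / r * ω s := mul_le_mul_of_nonneg_right (mul_log_div_le hr hs.1.le hs.2.le) (hω s hs)

lemma mul_weightTail_midpoint_le (hr : 0 < r) (hint : IntegrableOn ω (Ioo r 1))
    (hω : ∀ s ∈ Ioo r 1, 0 ≤ ω s) :
    (1 - r) / 2 * weightTail ω ((1 + r) / 2) ≤ weightLogTail ω r := by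
  have hsub : Ioo ((1 + r) / 2) 1 ⊆ Ioo r 1 := by
    by_cases hr1 : r < 1
    · exact Ioo_subset_Ioo (by linarith) le_rfl
    · simp [Ioo_eq_empty_of_le (show 1 ≤ (1 + r) / 2 by linarith)]
  have hf := integrableOn_mul_mul_log_div hr hint
  rw [weightTail, ← integral_const_mul]
  calc ∫ s in Ioo ((1 + r) / 2) 1, (1 - r) / 2 * ω s
      ≤ ∫ s in Ioo ((1 + r) / 2) 1, s * ω s * log (s / r) := by
        refine setIntegral_mono_on ((hint.mono_set hsub).const_mul _) (hf.mono_set hsub)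
          measurableSet_Ioo fun s hs ↦ ?_
        calc (1 - r) / 2 * ω s ≤ s * log (s / r) * ω s := by
              refine mul_le_mul_of_nonneg_right ?_ (hω s (hsub hs))
              linarith [hs.1, sub_le_mul_log_div hr (hr.trans (hsub hs).1)]
          _ = s * ω s * log (s / r) := by ring
    _ ≤ weightLogTail ω r := by
        refine setIntegral_mono_set hf ?_ hsub.eventuallyLE
        filter_upwards [ae_restrict_mem measurableSet_Ioo] with s hs
        have hlog := log_nonneg ((one_le_div hr).2 hs.1.le)
        exact mul_nonneg (mul_nonneg (hr.trans hs.1).le (hω s hs)) hlog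

end

/-- For a double weight `ω`, `ω_*(r) ≍ (1-r) ω̂(r)` as `r → 1`. -/
theorem stmt_3 (ω : ℝ → ℝ)
    (hint : IntegrableOn ω (Ioo (0:ℝ) 1))
    (hpos : ∀ r ∈ Ioo (0:ℝ) 1, 0 < ω r)
    (C : ℝ) (hC : 0 < C)
    (hdbl : ∀ r ∈ Ioo (0:ℝ) 1,
      (∫ s in Ioo r 1, ω s) ≤ C * ∫ s in Ioo ((1 + r) / 2) 1, ω s) :
    ∃ c₁ c₂ r₀ : ℝ, 0 < c₁ ∧ 0 < c₂ ∧ r₀ ∈ Ioo (0:ℝ) 1 ∧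
      ∀ r ∈ Ioo r₀ 1,
        c₁ * (1 - r) * (∫ s in Ioo r 1, ω s) ≤
            (∫ s in Ioo r 1, s * ω s * Real.log (s / r)) ∧
        (∫ s in Ioo r 1, s * ω s * Real.log (s / r)) ≤
            c₂ * (1 - r) * (∫ s in Ioo r 1, ω s) := by
  refine ⟨1 / (2 * C), 2, 1 / 2, by positivity, two_pos, ⟨by norm_num, by norm_num⟩, ?_⟩
  rintro r ⟨hr₀, hr₁⟩
  have hr : 0 < r := by linarith
  have hint_r : IntegrableOn ω (Ioo r 1) := hint.mono_set (Ioo_subset_Ioo hr.le le_rfl)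
  have hω : ∀ s ∈ Ioo r 1, 0 ≤ ω s := fun s hs ↦ (hpos s ⟨hr.trans hs.1, hs.2⟩).le
  have hdbl_r : weightTail ω r ≤ C * weightTail ω ((1 + r) / 2) := hdbl r ⟨hr, hr₁⟩
  have hlower := mul_weightTail_midpoint_le hr hint_r hω
  have hupper := weightLogTail_le hr hint_r hω
  have htail := weightTail_nonneg hω
  change 1 / (2 * C) * (1 - r) * weightTail ω r ≤ weightLogTail ω r ∧
    weightLogTail ω r ≤ 2 * (1 - r) * weightTail ω r
  constructor
  · calc 1 / (2 * C) * (1 - r) * weightTail ω r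
        ≤ 1 / (2 * C) * (1 - r) * (C * weightTail ω ((1 + r) / 2)) := by
          gcongr
      _ = (1 - r) / 2 * weightTail ω ((1 + r) / 2) := by field_simp
      _ ≤ weightLogTail ω r := hlower
  · calc weightLogTail ω r ≤ (1 - r) / r * weightTail ω r := hupper
      _ ≤ 2 * (1 - r) * weightTail ω r := by
          gcongr
          rw [div_le_iff₀ hr]
          nlinarith
end

section
/- Let φ : 𝔻 → 𝔻 be holomorphic on the open unit disk. Then φ extends to (or equals) a finite Blaschke product if and only if |φ(w)| → 1 as |w| → 1⁻. -/
/-!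
A finite Blaschke product is continuous on the closed disk and unimodular on the circle, so by
uniform continuity its modulus tends to `1` at the boundary.

Conversely, if `|φ| → 1` then the zeros of `φ` stay in a disk of radius `t < 1`. Dividing out one
zero `a` at a time by the factor `(a - z) / (1 - conj a * z)` keeps the quotient holomorphic and, by
the maximum principle (the factor has modulus tending to `1`), bounded by `1`. At a point `z₀` with
`t < |z₀| < 1` all these factors have modulus at most some `c < 1` while `φ z₀ ≠ 0`, so only
finitely many divisions are possible: `φ = g ∏ (factors)` with `g` zero-free and
`|φ| ≤ |g| ≤ 1`. The maximum principle for `1 / g` then gives `|g| ≥ 1`, hence `|g| ≡ 1` and `g`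
is a unimodular constant.
-/

open Complex Set Metric

noncomputable def blaschkeFactor (a z : ℂ) : ℂ := (a - z) / (1 - (starRingEnd ℂ) a * z)

noncomputable def blaschkeProduct (l : ℂ) (m : ℕ) {n : ℕ} (a : Fin n → ℂ) (z : ℂ) : ℂ :=
  l * z ^ m * ∏ k, blaschkeFactor (a k) z

section BlaschkeFactor

variable {a z : ℂ}

theorem sq_norm_one_sub_conj_mul_sub_sq_norm_sub (a z : ℂ) :
    ‖1 - (starRingEnd ℂ) a * z‖ ^ 2 - ‖a - z‖ ^ 2 = (1 - ‖a‖ ^ 2) * (1 - ‖z‖ ^ 2) := by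
  simp only [Complex.sq_norm, Complex.normSq_apply, Complex.sub_re, Complex.sub_im,
    Complex.mul_re, Complex.mul_im, Complex.one_re, Complex.one_im, Complex.conj_re,
    Complex.conj_im]
  ring

theorem norm_one_sub_conj_mul_pos (ha : ‖a‖ < 1) (hz : ‖z‖ ≤ 1) :
    0 < ‖1 - (starRingEnd ℂ) a * z‖ := by
  have : 1 - ‖a‖ * ‖z‖ ≤ ‖1 - (starRingEnd ℂ) a * z‖ := by
    simpa using norm_sub_norm_le (1 : ℂ) ((starRingEnd ℂ) a * z)
  nlinarith [norm_nonneg a, norm_nonneg z]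

theorem blaschkeFactor_zero_left (z : ℂ) : blaschkeFactor 0 z = -z := by
  simp [blaschkeFactor]

theorem norm_blaschkeFactor_le_one (ha : ‖a‖ < 1) (hz : ‖z‖ ≤ 1) : ‖blaschkeFactor a z‖ ≤ 1 := by
  have hd := norm_one_sub_conj_mul_pos ha hz
  rw [blaschkeFactor, norm_div, div_le_one hd, ← sq_le_sq₀ (norm_nonneg _) hd.le]
  have : 0 ≤ (1 - ‖a‖ ^ 2) * (1 - ‖z‖ ^ 2) :=
    mul_nonneg (by nlinarith [norm_nonneg a]) (by nlinarith [norm_nonneg z])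
  linarith [sq_norm_one_sub_conj_mul_sub_sq_norm_sub a z]

theorem norm_blaschkeFactor_eq_one (ha : ‖a‖ < 1) (hz : ‖z‖ = 1) : ‖blaschkeFactor a z‖ = 1 := by
  have hd := norm_one_sub_conj_mul_pos ha hz.le
  have hsq := sq_norm_one_sub_conj_mul_sub_sq_norm_sub a z
  rw [hz, one_pow, sub_self, mul_zero, sub_eq_zero] at hsq
  rw [blaschkeFactor, norm_div, div_eq_one_iff_eq hd.ne',
    ← sq_eq_sq₀ (norm_nonneg _) (norm_nonneg _), hsq]

theorem continuousOn_blaschkeFactor (ha : ‖a‖ < 1) :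
    ContinuousOn (blaschkeFactor a) (closedBall 0 1) := by
  refine (continuousOn_const.sub continuousOn_id).div (by fun_prop) fun z hz => ?_
  exact norm_pos_iff.mp (norm_one_sub_conj_mul_pos ha (mem_closedBall_zero_iff.mp hz))

theorem exists_norm_blaschkeFactor_le {t : ℝ} (ht0 : 0 ≤ t) (ht1 : t < 1) (hz : ‖z‖ < 1) :
    ∃ c < 1, ∀ a : ℂ, ‖a‖ ≤ t → ‖blaschkeFactor a z‖ ≤ c := by
  set ε := (1 - t ^ 2) * (1 - ‖z‖ ^ 2)
  have hε : 0 < ε := mul_pos (by nlinarith) (by nlinarith [norm_nonneg z])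
  have hε1 : ε ≤ 1 := mul_le_one₀ (by nlinarith) (by nlinarith [norm_nonneg z]) (by nlinarith)
  have hc : √(1 - ε / 4) ^ 2 = 1 - ε / 4 := Real.sq_sqrt (by linarith)
  refine ⟨√(1 - ε / 4), (Real.sqrt_lt' one_pos).2 (by linarith), fun a ha => ?_⟩
  have hd := norm_one_sub_conj_mul_pos (ha.trans_lt ht1) hz.le
  have hd2 : ‖1 - (starRingEnd ℂ) a * z‖ ≤ 2 := by
    have := norm_sub_le (1 : ℂ) ((starRingEnd ℂ) a * z)
    simp only [norm_one, norm_mul, RCLike.norm_conj] at this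
    nlinarith [norm_nonneg a, norm_nonneg z]
  rw [blaschkeFactor, norm_div, div_le_iff₀ hd, ← sq_le_sq₀ (norm_nonneg _) (by positivity),
    mul_pow, hc]
  have hεa : ε ≤ (1 - ‖a‖ ^ 2) * (1 - ‖z‖ ^ 2) :=
    mul_le_mul_of_nonneg_right (by nlinarith [norm_nonneg a]) (by nlinarith [norm_nonneg z])
  have hεd : ε * ‖1 - (starRingEnd ℂ) a * z‖ ^ 2 ≤ ε * 4 :=
    mul_le_mul_of_nonneg_left (by nlinarith) hε.le
  linarith [sq_norm_one_sub_conj_mul_sub_sq_norm_sub a z]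

end BlaschkeFactor

section BlaschkeProduct

variable {l : ℂ} {m n : ℕ} {a : Fin n → ℂ}

theorem continuousOn_blaschkeProduct (ha : ∀ k, a k ∈ ball (0 : ℂ) 1) :
    ContinuousOn (blaschkeProduct l m a) (closedBall 0 1) :=
  (continuousOn_const.mul (continuousOn_id.pow m)).mul <| continuousOn_finsetProd _
    fun k _ => continuousOn_blaschkeFactor (mem_ball_zero_iff.mp (ha k))

theorem norm_blaschkeProduct_eq_one (hl : ‖l‖ = 1) (ha : ∀ k, a k ∈ ball (0 : ℂ) 1) {z : ℂ}
    (hz : ‖z‖ = 1) : ‖blaschkeProduct l m a z‖ = 1 := by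
  simp only [blaschkeProduct, norm_mul, norm_pow, norm_prod, hl, hz, one_pow,
    norm_blaschkeFactor_eq_one (mem_ball_zero_iff.mp (ha _)) hz, Finset.prod_const_one, mul_one]

theorem exists_prod_blaschkeFactor_eq {S : Set ℂ} :
    ∀ {n : ℕ} (a : Fin n → ℂ), (∀ i, a i ∈ S) →
      ∃ (m n' : ℕ) (b : Fin n' → ℂ), (∀ k, b k ∈ S ∧ b k ≠ 0) ∧
        ∀ z, ∏ i, blaschkeFactor (a i) z = blaschkeProduct ((-1) ^ m) m b z
  | 0, _, _ => ⟨0, 0, Fin.elim0, fun k => k.elim0, by simp [blaschkeProduct]⟩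
  | n + 1, a, ha => by
    obtain ⟨m, n', b, hb, hprod⟩ := exists_prod_blaschkeFactor_eq (Fin.tail a) fun i => ha _
    by_cases h0 : a 0 = 0
    · refine ⟨m + 1, n', b, hb, fun z => ?_⟩
      rw [Fin.prod_univ_succ, h0, blaschkeFactor_zero_left]
      simp only [Fin.tail] at hprod
      rw [hprod]
      simp only [blaschkeProduct]
      ring
    · refine ⟨m, n' + 1, Fin.cons (a 0) b, Fin.cases ⟨ha 0, h0⟩ hb, fun z => ?_⟩
      rw [Fin.prod_univ_succ]
      simp only [Fin.tail] at hprod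
      rw [hprod]
      simp only [blaschkeProduct, Fin.prod_univ_succ, Fin.cons_zero, Fin.cons_succ]
      ring

end BlaschkeProduct

def NormTendstoOneAtBoundary (f : ℂ → ℂ) : Prop :=
  ∀ r ∈ Ioo (0 : ℝ) 1, ∃ t ∈ Ioo (0 : ℝ) 1, ∀ z : ℂ, ‖z‖ < 1 → t < ‖z‖ → r < ‖f z‖

namespace NormTendstoOneAtBoundary

variable {f g : ℂ → ℂ}

theorem congr (hf : NormTendstoOneAtBoundary f) (hfg : EqOn f g (ball 0 1)) :
    NormTendstoOneAtBoundary g := by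
  intro r hr
  obtain ⟨t, ht, hft⟩ := hf r hr
  refine ⟨t, ht, fun z hz htz => ?_⟩
  rw [← hfg (mem_ball_zero_iff.mpr hz)]
  exact hft z hz htz

/-- Uniform continuity on the closed disk compares `f z` with `f (z / ‖z‖)`. -/
theorem of_continuousOn (hf : ContinuousOn f (closedBall 0 1))
    (hf1 : ∀ w : ℂ, ‖w‖ = 1 → ‖f w‖ = 1) : NormTendstoOneAtBoundary f := by
  rintro r ⟨hr0, hr1⟩
  obtain ⟨δ, hδ, hfδ⟩ := Metric.uniformContinuousOn_iff.mp
    ((isCompact_closedBall (0 : ℂ) 1).uniformContinuousOn_of_continuous hf) (1 - r) (by linarith)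
  refine ⟨max (1 - δ) (1 / 2), ⟨by positivity, max_lt (by linarith) (by norm_num)⟩,
    fun z hz htz => ?_⟩
  have hz0 : 0 < ‖z‖ := lt_of_le_of_lt (by positivity) ((le_max_right _ _).trans_lt htz)
  set w : ℂ := (‖z‖⁻¹ : ℂ) * z
  have hw : ‖w‖ = 1 := by simp [w, hz0.ne']
  have hzw : dist z w = 1 - ‖z‖ := by
    have : z - w = ((1 - ‖z‖⁻¹ : ℝ) : ℂ) * z := by simp only [w]; push_cast; ring
    rw [dist_eq_norm, this, norm_mul, Complex.norm_real, Real.norm_eq_abs,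
      abs_of_nonpos (by rw [sub_nonpos]; exact one_le_inv₀ hz0 |>.mpr hz.le)]
    field_simp
    ring
  have hfzw := hfδ z (mem_closedBall_zero_iff.mpr hz.le) w (mem_closedBall_zero_iff.mpr hw.le)
    (by rw [hzw]; linarith [le_max_left (1 - δ) (1 / 2)])
  have := norm_sub_norm_le (f w) (f z)
  rw [← dist_eq_norm, dist_comm, hf1 w hw] at this
  linarith

theorem norm_le_one_of_norm_mul_le_one (hf : NormTendstoOneAtBoundary f)
    (hg : DifferentiableOn ℂ g (ball 0 1)) (hgf : ∀ z ∈ ball (0 : ℂ) 1, ‖g z‖ * ‖f z‖ ≤ 1)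
    {z : ℂ} (hz : z ∈ ball (0 : ℂ) 1) : ‖g z‖ ≤ 1 := by
  rw [mem_ball_zero_iff] at hz
  refine le_of_forall_gt_imp_ge_of_dense fun c hc => ?_
  obtain ⟨t, ⟨ht0, ht1⟩, hft⟩ := hf c⁻¹ ⟨by positivity, inv_lt_one_of_one_lt₀ hc⟩
  obtain ⟨s, hts, hs1⟩ := exists_between (max_lt ht1 hz)
  have hs0 : 0 < s := ht0.trans_le (le_max_left _ _) |>.trans hts
  refine Complex.norm_le_of_forall_mem_frontier_norm_le isBounded_ball
    (hg.diffContOnCl_ball (closedBall_subset_ball hs1)) (fun w hw => ?_)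
    (subset_closure (mem_ball_zero_iff.mpr ((le_max_right _ _).trans_lt hts)))
  rw [frontier_ball 0 hs0.ne', mem_sphere_zero_iff_norm] at hw
  have hw1 : ‖w‖ < 1 := hw ▸ hs1
  have hfw := hft w hw1 (hw ▸ (le_max_left _ _).trans_lt hts)
  have := hgf w (mem_ball_zero_iff.mpr hw1)
  rw [inv_lt_iff_one_lt_mul₀ (by linarith)] at hfw
  nlinarith [norm_nonneg (g w)]

end NormTendstoOneAtBoundary

theorem normTendstoOneAtBoundary_blaschkeProduct {l : ℂ} {m n : ℕ} {a : Fin n → ℂ} (hl : ‖l‖ = 1)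
    (ha : ∀ k, a k ∈ ball (0 : ℂ) 1) : NormTendstoOneAtBoundary (blaschkeProduct l m a) :=
  .of_continuousOn (continuousOn_blaschkeProduct ha) fun _ => norm_blaschkeProduct_eq_one hl ha

section Factorization

variable {ψ : ℂ → ℂ}

theorem exists_eq_blaschkeFactor_mul (hψ : DifferentiableOn ℂ ψ (ball 0 1))
    (hψ1 : ∀ z ∈ ball (0 : ℂ) 1, ‖ψ z‖ ≤ 1) {a : ℂ} (ha : a ∈ ball (0 : ℂ) 1) (hψa : ψ a = 0) :
    ∃ ψ' : ℂ → ℂ, DifferentiableOn ℂ ψ' (ball 0 1) ∧ (∀ z ∈ ball (0 : ℂ) 1, ‖ψ' z‖ ≤ 1) ∧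
      ∀ z ∈ ball (0 : ℂ) 1, ψ z = blaschkeFactor a z * ψ' z := by
  have ha1 : ‖a‖ < 1 := mem_ball_zero_iff.mp ha
  set ψ' : ℂ → ℂ := fun z => dslope ψ a z * ((starRingEnd ℂ) a * z - 1)
  have hψ' : DifferentiableOn ℂ ψ' (ball 0 1) :=
    ((differentiableOn_dslope (isOpen_ball.mem_nhds ha)).mpr hψ).mul (by fun_prop)
  have hψψ' : ∀ z ∈ ball (0 : ℂ) 1, ψ z = blaschkeFactor a z * ψ' z := by
    intro z hz
    rcases eq_or_ne z a with rfl | hza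
    · simp [hψa, blaschkeFactor, ψ']
    have hd : 1 - z * (starRingEnd ℂ) a ≠ 0 := by
      rw [mul_comm]
      exact norm_pos_iff.mp (norm_one_sub_conj_mul_pos ha1 (mem_ball_zero_iff.mp hz).le)
    simp only [ψ', blaschkeFactor, dslope_of_ne _ hza, slope_def_field, hψa, sub_zero]
    field_simp [sub_ne_zero.mpr hza]
    ring
  refine ⟨ψ', hψ', fun z hz => ?_, hψψ'⟩
  refine (NormTendstoOneAtBoundary.of_continuousOn (continuousOn_blaschkeFactor ha1)
    fun w hw => norm_blaschkeFactor_eq_one ha1 hw).norm_le_one_of_norm_mul_le_one hψ'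
    (fun w hw => ?_) hz
  rw [mul_comm, ← norm_mul, ← hψψ' w hw]
  exact hψ1 w hw

theorem exists_eq_mul_prod_blaschkeFactor_of_pow_lt_norm {z₀ : ℂ} {c : ℝ}
    (hz₀ : z₀ ∈ ball (0 : ℂ) 1) (k : ℕ)
    (hψ : DifferentiableOn ℂ ψ (ball 0 1)) (hψ1 : ∀ z ∈ ball (0 : ℂ) 1, ‖ψ z‖ ≤ 1)
    (hzeros : ∀ a ∈ ball (0 : ℂ) 1, ψ a = 0 → ‖blaschkeFactor a z₀‖ ≤ c)
    (hk : c ^ k < ‖ψ z₀‖) :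
    ∃ (n : ℕ) (a : Fin n → ℂ) (g : ℂ → ℂ), (∀ i, a i ∈ ball (0 : ℂ) 1) ∧
      DifferentiableOn ℂ g (ball 0 1) ∧ (∀ z ∈ ball (0 : ℂ) 1, g z ≠ 0 ∧ ‖g z‖ ≤ 1) ∧
      ∀ z ∈ ball (0 : ℂ) 1, ψ z = g z * ∏ i, blaschkeFactor (a i) z := by
  induction k generalizing ψ with
  | zero => exact absurd (hψ1 z₀ hz₀) (by simpa using hk)
  | succ k ih =>
    by_cases hzero : ∃ a ∈ ball (0 : ℂ) 1, ψ a = 0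
    · obtain ⟨a, ha, hψa⟩ := hzero
      obtain ⟨ψ', hψ', hψ'1, hψψ'⟩ := exists_eq_blaschkeFactor_mul hψ hψ1 ha hψa
      have hc : ‖blaschkeFactor a z₀‖ ≤ c := hzeros a ha hψa
      have hk' : c ^ k < ‖ψ' z₀‖ := by
        refine lt_of_mul_lt_mul_left ?_ ((norm_nonneg _).trans hc)
        calc c * c ^ k = c ^ (k + 1) := (pow_succ' c k).symm
          _ < ‖ψ z₀‖ := hk
          _ = ‖blaschkeFactor a z₀‖ * ‖ψ' z₀‖ := by rw [hψψ' z₀ hz₀, norm_mul]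
          _ ≤ c * ‖ψ' z₀‖ := mul_le_mul_of_nonneg_right hc (norm_nonneg _)
      have hzeros' : ∀ b ∈ ball (0 : ℂ) 1, ψ' b = 0 → ‖blaschkeFactor b z₀‖ ≤ c :=
        fun b hb hψ'b => hzeros b hb (by rw [hψψ' b hb, hψ'b, mul_zero])
      obtain ⟨n, b, g, hb, hg, hg1, hψ'g⟩ := ih hψ' hψ'1 hzeros' hk'
      refine ⟨n + 1, Fin.cons a b, g, Fin.cases ha hb, hg, hg1, fun z hz => ?_⟩
      rw [hψψ' z hz, hψ'g z hz, Fin.prod_univ_succ]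
      simp only [Fin.cons_zero, Fin.cons_succ]
      ring
    · push Not at hzero
      exact ⟨0, Fin.elim0, ψ, fun i => i.elim0, hψ, fun z hz => ⟨hzero z hz, hψ1 z hz⟩,
        fun z _ => by simp⟩

end Factorization

theorem NormTendstoOneAtBoundary.exists_eq_mul_prod_blaschkeFactor {φ : ℂ → ℂ}
    (hbd : NormTendstoOneAtBoundary φ) (hφ : DifferentiableOn ℂ φ (ball 0 1))
    (hφ1 : ∀ z ∈ ball (0 : ℂ) 1, ‖φ z‖ ≤ 1) :
    ∃ (n : ℕ) (a : Fin n → ℂ) (g : ℂ → ℂ), (∀ i, a i ∈ ball (0 : ℂ) 1) ∧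
      DifferentiableOn ℂ g (ball 0 1) ∧ (∀ z ∈ ball (0 : ℂ) 1, g z ≠ 0 ∧ ‖g z‖ ≤ 1) ∧
      ∀ z ∈ ball (0 : ℂ) 1, φ z = g z * ∏ i, blaschkeFactor (a i) z := by
  obtain ⟨t, ⟨ht0, ht1⟩, hφt⟩ := hbd (1 / 2) ⟨by norm_num, by norm_num⟩
  obtain ⟨s, hts, hs1⟩ := exists_between ht1
  have hs : ‖(s : ℂ)‖ = s := by simp [abs_of_pos (ht0.trans hts)]
  have hs1' : ‖(s : ℂ)‖ < 1 := by rwa [hs]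
  obtain ⟨c, hc1, hc⟩ := exists_norm_blaschkeFactor_le ht0.le ht1 hs1'
  have hφs : 1 / 2 < ‖φ s‖ := hφt s hs1' (by rwa [hs])
  obtain ⟨k, hk⟩ := exists_pow_lt_of_lt_one (by linarith) hc1
  have hzeros : ∀ a ∈ ball (0 : ℂ) 1, φ a = 0 → ‖blaschkeFactor a s‖ ≤ c := by
    refine fun a ha hφa => hc a (not_lt.mp fun hta => ?_)
    have := hφt a (mem_ball_zero_iff.mp ha) hta
    rw [hφa, norm_zero] at this
    linarith
  exact exists_eq_mul_prod_blaschkeFactor_of_pow_lt_norm (mem_ball_zero_iff.mpr hs1') k hφ hφ1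
    hzeros hk

theorem exists_blaschkeProduct_of_normTendstoOneAtBoundary {φ : ℂ → ℂ}
    (hφ : DifferentiableOn ℂ φ (ball 0 1)) (hmap : MapsTo φ (ball (0 : ℂ) 1) (ball (0 : ℂ) 1))
    (hbd : NormTendstoOneAtBoundary φ) :
    ∃ (l : ℂ) (m n : ℕ) (a : Fin n → ℂ), ‖l‖ = 1 ∧ (∀ k, a k ∈ ball (0 : ℂ) 1 ∧ a k ≠ 0) ∧
      ∀ z ∈ ball (0 : ℂ) 1, φ z = blaschkeProduct l m a z := by
  obtain ⟨n, a, g, ha, hg, hg1, hφg⟩ := hbd.exists_eq_mul_prod_blaschkeFactor hφ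
    fun z hz => (mem_ball_zero_iff.mp (hmap hz)).le
  have hφg_le : ∀ z ∈ ball (0 : ℂ) 1, ‖φ z‖ ≤ ‖g z‖ := by
    intro z hz
    rw [hφg z hz, norm_mul, norm_prod]
    refine mul_le_of_le_one_right (norm_nonneg _) (Finset.prod_le_one (fun _ _ => norm_nonneg _)
      fun i _ => ?_)
    exact norm_blaschkeFactor_le_one (mem_ball_zero_iff.mp (ha i)) (mem_ball_zero_iff.mp hz).le
  have hg_norm : ∀ z ∈ ball (0 : ℂ) 1, ‖g z‖ = 1 := by
    refine fun z hz => le_antisymm (hg1 z hz).2 ?_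
    have hg_inv := hbd.norm_le_one_of_norm_mul_le_one (hg.inv fun w hw => (hg1 w hw).1)
      (fun w hw => ?_) hz
    · rwa [Pi.inv_apply, norm_inv, inv_le_one₀ (norm_pos_iff.mpr (hg1 z hz).1)] at hg_inv
    · rw [Pi.inv_apply, norm_inv, inv_mul_le_iff₀ (norm_pos_iff.mpr (hg1 w hw).1), mul_one]
      exact hφg_le w hw
  have h0 : (0 : ℂ) ∈ ball (0 : ℂ) 1 := mem_ball_self one_pos
  have hconst := Complex.eqOn_of_isPreconnected_of_isMaxOn_norm
    (convex_ball (0 : ℂ) 1).isPreconnected isOpen_ball hg h0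
    fun z hz => by simp [hg_norm z hz, hg_norm 0 h0]
  obtain ⟨m, n', b, hb, hprod⟩ := exists_prod_blaschkeFactor_eq a ha
  refine ⟨g 0 * (-1) ^ m, m, n', b, by simp [hg_norm 0 h0], hb, fun z hz => ?_⟩
  rw [hφg z hz, hconst hz, hprod]
  simp only [Function.const_apply, blaschkeProduct]
  ring

/-- A holomorphic self-map `φ` of the unit disk is a finite Blaschke product iff
`|φ(w)| → 1` as `|w| → 1⁻`. -/
theorem stmt_5 (φ : ℂ → ℂ)
    (hφ : DifferentiableOn ℂ φ (ball (0:ℂ) 1))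
    (hmap : MapsTo φ (ball (0:ℂ) 1) (ball (0:ℂ) 1)) :
    (∃ (l : ℂ) (m n : ℕ) (a : Fin n → ℂ), ‖l‖ = 1 ∧ (∀ k, a k ∈ ball (0:ℂ) 1 ∧ a k ≠ 0) ∧
        ∀ z ∈ ball (0:ℂ) 1,
          φ z = l * z ^ m * ∏ k, (a k - z) / (1 - (starRingEnd ℂ) (a k) * z)) ↔
      (∀ r ∈ Ioo (0:ℝ) 1, ∃ t ∈ Ioo (0:ℝ) 1,
        ∀ z : ℂ, ‖z‖ < 1 → t < ‖z‖ → r < ‖φ z‖) := by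
  refine ⟨fun ⟨l, m, n, a, hl, ha, hφ_eq⟩ => ?_,
    exists_blaschkeProduct_of_normTendstoOneAtBoundary hφ hmap⟩
  exact (normTendstoOneAtBoundary_blaschkeProduct (m := m) hl fun k => (ha k).1).congr
    fun z hz => (hφ_eq z hz).symm
end

section
/- There exists C₁ > 0 such that for all 0 ≤ r ≤ t < 1, log(e(1-rt)/((1-t)(1+r))) · log(e/(1-r)) ≥ C₁ · log(e/(1-t)). -/
/-!
With `x = log (1 - t) ≤ y = log (1 - r) ≤ 0`, the first logarithm is `1 + log (1 - r t) - x -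
log (1 + r) ≥ (1 - log 2) + (y - x)`, because `1 - r t ≥ 1 - r` and `1 + r ≤ 2`, while the other
two are `1 - y` and `1 - x`. Since `1 - y ≥ 1` and `1 - log 2 < 1`, the product
`((1 - log 2) + (y - x)) (1 - y)` is at least `(1 - log 2)(1 - y) + (1 - log 2)(y - x)
= (1 - log 2)(1 - x)`, so `C₁ = 1 - log 2` works.
-/

open Real

lemma Real.log_exp_one_div {x : ℝ} (hx : 0 < x) : log (exp 1 / x) = 1 - log x := by
  rw [log_div (exp_pos 1).ne' hx.ne', log_exp]

lemma Real.one_sub_log_two_pos : 0 < 1 - log 2 :=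
  sub_pos.2 (log_two_lt_d9.trans (by norm_num))

lemma Real.log_exp_one_mul_div_ge {r t : ℝ} (hr : 0 ≤ r) (hr1 : r < 1) (ht : t < 1) :
    1 - log 2 + (log (1 - r) - log (1 - t)) ≤
      log (exp 1 * (1 - r * t) / ((1 - t) * (1 + r))) := by
  have h1t : 0 < 1 - t := by linarith
  have h1rt : 0 < 1 - r * t := by nlinarith
  rw [log_div (by positivity) (by positivity), log_mul (exp_pos 1).ne' h1rt.ne',
    log_mul h1t.ne' (by positivity), log_exp]
  have hrt : log (1 - r) ≤ log (1 - r * t) := log_le_log (by linarith) (by nlinarith)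
  have h2 : log (1 + r) ≤ log 2 := log_le_log (by linarith) (by linarith)
  linarith

lemma mul_one_sub_le_add_sub_mul_one_sub {c x y : ℝ} (hc1 : c ≤ 1) (hxy : x ≤ y) (hy : y ≤ 0) :
    c * (1 - x) ≤ (c + (y - x)) * (1 - y) := by
  nlinarith [mul_nonneg (sub_nonneg.2 hxy) (by linarith : 0 ≤ 1 - y - c)]

/-- There is `C₁ > 0` such that for all `0 ≤ r ≤ t < 1`,
`log(e(1-rt)/((1-t)(1+r))) · log(e/(1-r)) ≥ C₁ · log(e/(1-t))`. -/
theorem stmt_9 :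
    ∃ C₁ : ℝ, 0 < C₁ ∧ ∀ r t : ℝ, 0 ≤ r → r ≤ t → t < 1 →
      C₁ * Real.log (Real.exp 1 / (1 - t)) ≤
        Real.log (Real.exp 1 * (1 - r * t) / ((1 - t) * (1 + r))) *
          Real.log (Real.exp 1 / (1 - r)) := by
  refine ⟨1 - log 2, one_sub_log_two_pos, fun r t hr hrt ht => ?_⟩
  have h1t : 0 < 1 - t := by linarith
  have h1r : 0 < 1 - r := by linarith
  rw [log_exp_one_div h1t, log_exp_one_div h1r]
  have hxy : log (1 - t) ≤ log (1 - r) := log_le_log h1t (by linarith)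
  have hy : log (1 - r) ≤ 0 := log_nonpos h1r.le (by linarith)
  calc (1 - log 2) * (1 - log (1 - t))
      ≤ (1 - log 2 + (log (1 - r) - log (1 - t))) * (1 - log (1 - r)) :=
        mul_one_sub_le_add_sub_mul_one_sub (sub_le_self _ (log_nonneg one_le_two)) hxy hy
    _ ≤ log (exp 1 * (1 - r * t) / ((1 - t) * (1 + r))) * (1 - log (1 - r)) :=
        mul_le_mul_of_nonneg_right (log_exp_one_mul_div_ge hr (by linarith) ht) (by linarith)
end

section
/- Let 0 < α ≤ 1, β > 0 and ω(r) = exp(-β (log(e/(1-r)))^α) on [0,1). Then there exists C > 0 such that for all 0 ≤ r ≤ t < 1, ω(φ_t(r)) · ω(r) ≤ C ω(t), where φ_t(r) = (t-r)/(1-tr). -/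
/-!
Write `L x = log (e / (1 - x)) = 1 - log (1 - x)`, so that `ω = exp (-β L^α)`. Since
`1 - φ_t(r) = (1 - t)(1 + r)/(1 - tr)`, one gets `(1 - φ_t(r))(1 - r) ≤ 2(1 - t) ≤ e(1 - t)`, i.e.
`L t ≤ L(φ_t(r)) + L r`. Subadditivity of `x ↦ x^α` for `α ≤ 1` upgrades this to
`(L t)^α ≤ L(φ_t(r))^α + (L r)^α`, which after exponentiation is the claim with `C = 1`.
-/

open Real

lemma one_sub_mobius {r t : ℝ} (htr : 1 - t * r ≠ 0) :
    1 - (t - r) / (1 - t * r) = (1 - t) * (1 + r) / (1 - t * r) := by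
  field_simp
  ring

lemma one_sub_mul_pos {r t : ℝ} (hr : 0 ≤ r) (ht : t < 1) (hr1 : r < 1) : 0 < 1 - t * r := by
  nlinarith

lemma mobius_nonneg {r t : ℝ} (hr : 0 ≤ r) (hrt : r ≤ t) (ht : t < 1) :
    0 ≤ (t - r) / (1 - t * r) :=
  div_nonneg (sub_nonneg.mpr hrt) (one_sub_mul_pos hr ht (hrt.trans_lt ht)).le

lemma one_sub_mobius_pos {r t : ℝ} (hr : 0 ≤ r) (hrt : r ≤ t) (ht : t < 1) :
    0 < 1 - (t - r) / (1 - t * r) := by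
  have htr := one_sub_mul_pos hr ht (hrt.trans_lt ht)
  rw [one_sub_mobius htr.ne']
  exact div_pos (mul_pos (by linarith) (by linarith)) htr

lemma one_sub_mobius_mul_one_sub_le {r t : ℝ} (hr : 0 ≤ r) (hrt : r ≤ t) (ht : t < 1) :
    (1 - (t - r) / (1 - t * r)) * (1 - r) ≤ 2 * (1 - t) := by
  have htr := one_sub_mul_pos hr ht (hrt.trans_lt ht)
  rw [one_sub_mobius htr.ne', div_mul_eq_mul_div, div_le_iff₀ htr]
  have h : (1 + r) * (1 - r) ≤ 2 * (1 - t * r) := by nlinarith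
  nlinarith [mul_le_mul_of_nonneg_left h (sub_nonneg.mpr ht.le)]

lemma log_exp_one_div_one_sub {x : ℝ} (hx : x < 1) :
    log (exp 1 / (1 - x)) = 1 - log (1 - x) := by
  rw [log_div (exp_ne_zero 1) (by linarith), log_exp]

lemma log_exp_one_div_one_sub_nonneg {x : ℝ} (hx0 : 0 ≤ x) (hx1 : x < 1) :
    0 ≤ log (exp 1 / (1 - x)) := by
  rw [log_exp_one_div_one_sub hx1]
  linarith [log_nonpos (by linarith : 0 ≤ 1 - x) (by linarith)]

lemma log_exp_one_div_one_sub_le_add {r t : ℝ} (hr : 0 ≤ r) (hrt : r ≤ t) (ht : t < 1) :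
    log (exp 1 / (1 - t)) ≤
      log (exp 1 / (1 - (t - r) / (1 - t * r))) + log (exp 1 / (1 - r)) := by
  set φ := (t - r) / (1 - t * r)
  have hφ := one_sub_mobius_pos hr hrt ht
  have hr1 : 0 < 1 - r := by linarith
  have h1t : 0 < 1 - t := by linarith
  have hprod : (1 - φ) * (1 - r) ≤ exp 1 * (1 - t) :=
    (one_sub_mobius_mul_one_sub_le hr hrt ht).trans <|
      mul_le_mul_of_nonneg_right (by linarith [add_one_le_exp (1 : ℝ)]) h1t.le
  have hlog := log_le_log (mul_pos hφ hr1) hprod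
  rw [log_mul hφ.ne' hr1.ne', log_mul (exp_ne_zero 1) h1t.ne', log_exp] at hlog
  rw [log_exp_one_div_one_sub ht, log_exp_one_div_one_sub (by linarith),
    log_exp_one_div_one_sub (hrt.trans_lt ht)]
  linarith

lemma rpow_log_exp_one_div_one_sub_le_add {α r t : ℝ} (hα0 : 0 ≤ α) (hα1 : α ≤ 1)
    (hr : 0 ≤ r) (hrt : r ≤ t) (ht : t < 1) :
    log (exp 1 / (1 - t)) ^ α ≤
      log (exp 1 / (1 - (t - r) / (1 - t * r))) ^ α + log (exp 1 / (1 - r)) ^ α :=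
  calc log (exp 1 / (1 - t)) ^ α
      ≤ (log (exp 1 / (1 - (t - r) / (1 - t * r))) + log (exp 1 / (1 - r))) ^ α :=
        rpow_le_rpow (log_exp_one_div_one_sub_nonneg (hr.trans hrt) ht)
          (log_exp_one_div_one_sub_le_add hr hrt ht) hα0
    _ ≤ _ := rpow_add_le_add_rpow
        (log_exp_one_div_one_sub_nonneg (mobius_nonneg hr hrt ht)
          (by linarith [one_sub_mobius_pos hr hrt ht]))
        (log_exp_one_div_one_sub_nonneg hr (hrt.trans_lt ht)) hα0 hα1

/-- For `0 < α ≤ 1`, `β > 0` and `ω r = exp(-β (log(e/(1-r)))^α)`, there is `C > 0` with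
`ω(φ_t(r)) ω(r) ≤ C ω(t)` for `0 ≤ r ≤ t < 1`, where `φ_t(r) = (t-r)/(1-tr)`. -/
theorem stmt_11 (α β : ℝ) (hα0 : 0 < α) (hα1 : α ≤ 1) (hβ : 0 < β)
    (ω : ℝ → ℝ) (hω : ∀ r : ℝ, ω r = Real.exp (-β * (Real.log (Real.exp 1 / (1 - r))) ^ α)) :
    ∃ C : ℝ, 0 < C ∧ ∀ r t : ℝ, 0 ≤ r → r ≤ t → t < 1 →
      ω ((t - r) / (1 - t * r)) * ω r ≤ C * ω t := by
  refine ⟨1, one_pos, fun r t hr hrt ht => ?_⟩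
  have key := rpow_log_exp_one_div_one_sub_le_add hα0.le hα1 hr hrt ht
  rw [hω, hω, hω, ← exp_add, one_mul, exp_le_exp]
  linarith [mul_le_mul_of_nonneg_left key hβ.le]
end

section
/- Let ω(r) = (1-r)^α (log(e/(1-r)))^β with α > -1, β ≤ 0, and define ω̂(r) = ∫_r^1 ω(s)ds and φ_t(r) = (t-r)/(1-tr). Then there is a constant C such that ω̂(φ_t(r)) ω̂(r) ≤ C ω̂(t) for all 0 ≤ r ≤ t < 1. -/
open Real MeasureTheory Set

/-!
Write `g(u) = u ^ (α + 1) (1 - log u) ^ β`. Substituting `u = 1 - s`, the tail `ω̂(r)` is the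
integral of `u ^ α (1 - log u) ^ β` over `[0, 1 - r]`, and it is comparable to `g(1 - r)`: from above
because `(1 - log u) ^ β` increases with `u`, from below by integrating only over
`[(1 - r) / 2, 1 - r]`. As `β ≤ 0`, `g` is increasing and super-multiplicative on `(0, 1]`
(because `1 - log (u v) ≤ (1 - log u) (1 - log v)`); since `(1 - φ_t(r)) (1 - r) ≤ 2 (1 - t)`, this gives
`g(1/2) g(1 - φ_t(r)) g(1 - r) ≤ g(1 - t)`.
-/

/-- `powLog α β (1 - r) = (1 - r) ^ α (log (e / (1 - r))) ^ β` is the weight `ω(r)`. -/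
noncomputable def powLog (γ β u : ℝ) : ℝ := u ^ γ * (1 - log u) ^ β

section powLog

variable {γ β u v : ℝ}

lemma one_le_one_sub_log (hu0 : 0 ≤ u) (hu1 : u ≤ 1) : 1 ≤ 1 - log u := by
  linarith [log_nonpos hu0 hu1]

lemma powLog_nonneg (hu0 : 0 ≤ u) (hu1 : u ≤ 1) : 0 ≤ powLog γ β u :=
  mul_nonneg (rpow_nonneg hu0 _) (rpow_nonneg (by linarith [one_le_one_sub_log hu0 hu1]) _)

lemma powLog_pos (hu0 : 0 < u) (hu1 : u ≤ 1) : 0 < powLog γ β u :=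
  mul_pos (rpow_pos_of_pos hu0 _)
    (rpow_pos_of_pos (by linarith [one_le_one_sub_log hu0.le hu1]) _)

lemma powLog_add_one (hu : 0 < u) : powLog (γ + 1) β u = u * powLog γ β u := by
  rw [powLog, powLog, rpow_add_one hu.ne']
  ring

lemma powLog_le_powLog (hγ : 0 ≤ γ) (hβ : β ≤ 0) (hu : 0 < u) (huv : u ≤ v) (hv : v ≤ 1) :
    powLog γ β u ≤ powLog γ β v := by
  have hlog : log u ≤ log v := log_le_log hu huv
  have hLv := one_le_one_sub_log (hu.le.trans huv) hv
  exact mul_le_mul (rpow_le_rpow hu.le huv hγ)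
    (rpow_le_rpow_of_nonpos (by linarith) (by linarith) hβ)
    (rpow_nonneg (by linarith) _) (rpow_nonneg (hu.le.trans huv) _)

lemma powLog_mul_powLog_le (hβ : β ≤ 0) (hu0 : 0 < u) (hu1 : u ≤ 1) (hv0 : 0 < v) (hv1 : v ≤ 1) :
    powLog γ β u * powLog γ β v ≤ powLog γ β (u * v) := by
  have hlu := log_nonpos hu0.le hu1
  have hlv := log_nonpos hv0.le hv1
  have huv0 := mul_pos hu0 hv0
  have hLuv := one_le_one_sub_log huv0.le (mul_le_one₀ hu1 hv0.le hv1)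
  have hL : 1 - log (u * v) ≤ (1 - log u) * (1 - log v) := by
    rw [log_mul hu0.ne' hv0.ne']
    nlinarith
  calc powLog γ β u * powLog γ β v
      = (u * v) ^ γ * ((1 - log u) * (1 - log v)) ^ β := by
        rw [powLog, powLog, mul_rpow hu0.le hv0.le, mul_rpow (by linarith) (by linarith)]
        ring
    _ ≤ powLog γ β (u * v) :=
        mul_le_mul_of_nonneg_left (rpow_le_rpow_of_nonpos (by linarith) hL hβ)
          (rpow_nonneg huv0.le _)

lemma powLog_half_mul_le_of_le_two_mul (hγ : 0 ≤ γ) (hβ : β ≤ 0) {w : ℝ} (hu0 : 0 < u)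
    (hu1 : u ≤ 1) (hw1 : w ≤ 1) (huw : u ≤ 2 * w) :
    powLog γ β (1 / 2) * powLog γ β u ≤ powLog γ β w :=
  (powLog_mul_powLog_le hβ (by norm_num) (by norm_num) hu0 hu1).trans
    (powLog_le_powLog hγ hβ (by positivity) (by linarith) hw1)

end powLog

section integral

variable {α β y : ℝ}

lemma intervalIntegrable_powLog (hα : -1 < α) (hβ : β ≤ 0) (hy0 : 0 ≤ y) (hy1 : y ≤ 1) :
    IntervalIntegrable (powLog α β) volume 0 y := by
  refine (intervalIntegral.intervalIntegrable_rpow' hα).mono_fun'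
    (by unfold powLog; fun_prop) ?_
  refine (ae_restrict_iff' measurableSet_uIoc).2 (ae_of_all _ fun u hu => ?_)
  rw [uIoc_of_le hy0] at hu
  have hu1 := hu.2.trans hy1
  dsimp only
  rw [norm_of_nonneg (powLog_nonneg hu.1.le hu1), powLog]
  exact mul_le_of_le_one_right (rpow_nonneg hu.1.le _)
    (rpow_le_one_of_one_le_of_nonpos (one_le_one_sub_log hu.1.le hu1) hβ)

lemma integral_powLog_le (hα : -1 < α) (hβ : β ≤ 0) (hy0 : 0 < y) (hy1 : y ≤ 1) :
    ∫ u in 0..y, powLog α β u ≤ powLog (α + 1) β y / (α + 1) := by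
  have hLy := one_le_one_sub_log hy0.le hy1
  calc ∫ u in 0..y, powLog α β u
      ≤ ∫ u in 0..y, u ^ α * (1 - log y) ^ β := by
        refine intervalIntegral.integral_mono_on_of_le_Ioo hy0.le
          (intervalIntegrable_powLog hα hβ hy0.le hy1)
          ((intervalIntegral.intervalIntegrable_rpow' hα).mul_const _) fun u hu => ?_
        refine mul_le_mul_of_nonneg_left (rpow_le_rpow_of_nonpos (by linarith) ?_ hβ)
          (rpow_nonneg hu.1.le _)
        linarith [log_le_log hu.1 hu.2.le]
    _ = powLog (α + 1) β y / (α + 1) := by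
        rw [intervalIntegral.integral_mul_const, integral_rpow (Or.inl hα),
          zero_rpow (by linarith), powLog]
        ring

lemma le_integral_powLog (hα : -1 < α) (hβ : β ≤ 0) (hy0 : 0 < y) (hy1 : y ≤ 1) :
    powLog (α + 1) β (1 / 2) * powLog (α + 1) β y / 2 ≤ ∫ u in 0..y, powLog α β u := by
  have hγ : 0 ≤ α + 1 := by linarith
  calc powLog (α + 1) β (1 / 2) * powLog (α + 1) β y / 2
      ≤ powLog (α + 1) β (1 / 2 * y) / 2 := by
        gcongr
        exact powLog_mul_powLog_le hβ (by norm_num) (by norm_num) hy0 hy1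
    _ = ∫ u in y / 2..y, powLog (α + 1) β (y / 2) / y := by
        rw [intervalIntegral.integral_const, smul_eq_mul]
        field_simp
        ring_nf
    _ ≤ ∫ u in y / 2..y, powLog α β u := by
        refine intervalIntegral.integral_mono_on (by linarith) intervalIntegrable_const
          ((intervalIntegrable_powLog hα hβ hy0.le hy1).mono_set ?_) fun u hu => ?_
        · rw [uIcc_of_le hy0.le, uIcc_of_le (by linarith)]
          exact Icc_subset_Icc (by linarith) le_rfl
        have hu0 : 0 < u := by linarith [hu.1]
        rw [div_le_iff₀ hy0]
        calc powLog (α + 1) β (y / 2)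
            ≤ powLog (α + 1) β u := powLog_le_powLog hγ hβ (by positivity) hu.1 (hu.2.trans hy1)
          _ = u * powLog α β u := powLog_add_one hu0
          _ ≤ powLog α β u * y := by
              rw [mul_comm]
              exact mul_le_mul_of_nonneg_left hu.2 (powLog_nonneg hu0.le (hu.2.trans hy1))
    _ ≤ ∫ u in 0..y, powLog α β u :=
        intervalIntegral.integral_mono_interval (by linarith) (by linarith) le_rfl
          ((ae_restrict_iff' measurableSet_Ioc).2 (ae_of_all _ fun u hu =>
            powLog_nonneg hu.1.le (hu.2.trans hy1)))
          (intervalIntegrable_powLog hα hβ hy0.le hy1)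

lemma integral_powLog_mul_integral_powLog_le (hα : -1 < α) (hβ : β ≤ 0) {u v w : ℝ}
    (hu0 : 0 < u) (hu1 : u ≤ 1) (hv0 : 0 < v) (hv1 : v ≤ 1) (hw0 : 0 < w) (hw1 : w ≤ 1)
    (huvw : u * v ≤ 2 * w) :
    (∫ s in 0..u, powLog α β s) * ∫ s in 0..v, powLog α β s
      ≤ 2 / ((α + 1) ^ 2 * powLog (α + 1) β (1 / 2) ^ 2) * ∫ s in 0..w, powLog α β s := by
  have hγ : 0 < α + 1 := by linarith
  set c := powLog (α + 1) β (1 / 2)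
  have hc : 0 < c := powLog_pos (by norm_num) (by norm_num)
  have key : c * (powLog (α + 1) β u * powLog (α + 1) β v) ≤ powLog (α + 1) β w :=
    (mul_le_mul_of_nonneg_left (powLog_mul_powLog_le hβ hu0 hu1 hv0 hv1) hc.le).trans
      (powLog_half_mul_le_of_le_two_mul hγ.le hβ (mul_pos hu0 hv0)
        (mul_le_one₀ hu1 hv0.le hv1) hw1 huvw)
  calc (∫ s in 0..u, powLog α β s) * ∫ s in 0..v, powLog α β s
      ≤ powLog (α + 1) β u / (α + 1) * (powLog (α + 1) β v / (α + 1)) :=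
        mul_le_mul (integral_powLog_le hα hβ hu0 hu1) (integral_powLog_le hα hβ hv0 hv1)
          (intervalIntegral.integral_nonneg hv0.le
            fun s hs => powLog_nonneg hs.1 (hs.2.trans hv1))
          (div_nonneg (powLog_nonneg hu0.le hu1) hγ.le)
    _ ≤ powLog (α + 1) β w / ((α + 1) ^ 2 * c) := by
        rw [div_mul_div_comm, ← sq, le_div_iff₀ (by positivity)]
        refine Eq.trans_le ?_ key
        field_simp
    _ = 2 / ((α + 1) ^ 2 * c ^ 2) * (c * powLog (α + 1) β w / 2) := by
        field_simp
    _ ≤ 2 / ((α + 1) ^ 2 * c ^ 2) * ∫ s in 0..w, powLog α β s :=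
        mul_le_mul_of_nonneg_left (le_integral_powLog hα hβ hw0 hw1) (by positivity)

end integral

lemma setIntegral_Ioo_comp_one_sub (f : ℝ → ℝ) {x : ℝ} (hx : x ≤ 1) :
    ∫ s in Ioo x 1, f (1 - s) = ∫ u in 0..1 - x, f u := by
  rw [← integral_Ioc_eq_integral_Ioo, ← intervalIntegral.integral_of_le hx,
    intervalIntegral.integral_comp_sub_left, sub_self]

lemma setIntegral_Ioo_eq_integral_powLog (α β : ℝ) {x : ℝ} (hx : x ≤ 1) :
    ∫ s in Ioo x 1, (1 - s) ^ α * log (exp 1 / (1 - s)) ^ β = ∫ u in 0..1 - x, powLog α β u := by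
  rw [← setIntegral_Ioo_comp_one_sub _ hx]
  refine setIntegral_congr_fun measurableSet_Ioo fun s hs => ?_
  rw [powLog, log_div (exp_ne_zero 1) (by linarith [hs.2]), log_exp]

section mobius

variable {r t : ℝ}

lemma mobius_mem_Ico (hr : 0 ≤ r) (hrt : r ≤ t) (ht : t < 1) :
    (t - r) / (1 - t * r) ∈ Ico 0 1 := by
  have hden : 0 < 1 - t * r := by nlinarith
  exact ⟨div_nonneg (by linarith) hden.le, (div_lt_one hden).2 (by nlinarith)⟩

/-- Uses `1 - φ_t(r) = (1 - t)(1 + r)/(1 - t r)` and `1 - t r ≥ 1 - r`. -/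
lemma one_sub_mobius_mul_le (hr : 0 ≤ r) (hrt : r ≤ t) (ht : t < 1) :
    (1 - (t - r) / (1 - t * r)) * (1 - r) ≤ 2 * (1 - t) := by
  have hden : 0 < 1 - t * r := by nlinarith
  rw [one_sub_div hden.ne', div_mul_eq_mul_div, div_le_iff₀ hden]
  nlinarith [mul_nonneg (sub_nonneg.2 ht.le) (sq_nonneg (1 - r)),
    mul_nonneg (mul_nonneg (sub_nonneg.2 ht.le) hr) (sub_nonneg.2 ht.le)]

end mobius

/-- For `ω(r) = (1-r)^α (log(e/(1-r)))^β` with `α > -1`, `β ≤ 0`, there is `C` with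
`ω̂(φ_t(r)) ω̂(r) ≤ C ω̂(t)` for all `0 ≤ r ≤ t < 1`, where `φ_t(r) = (t-r)/(1-tr)`. -/
theorem stmt_18 (α β : ℝ) (hα : -1 < α) (hβ : β ≤ 0)
    (ω : ℝ → ℝ)
    (hω : ∀ r : ℝ, ω r = (1 - r) ^ α * (Real.log (Real.exp 1 / (1 - r))) ^ β)
    (ωh : ℝ → ℝ) (hωh : ∀ r : ℝ, ωh r = ∫ s in Ioo r 1, ω s) :
    ∃ C : ℝ, 0 < C ∧ ∀ r t : ℝ, 0 ≤ r → r ≤ t → t < 1 →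
      ωh ((t - r) / (1 - t * r)) * ωh r ≤ C * ωh t := by
  have hωh_eq : ∀ x ≤ 1, ωh x = ∫ u in 0..1 - x, powLog α β u := fun x hx => by
    simp only [hωh, hω]
    exact setIntegral_Ioo_eq_integral_powLog α β hx
  have hc : 0 < powLog (α + 1) β (1 / 2) := powLog_pos (by norm_num) (by norm_num)
  refine ⟨2 / ((α + 1) ^ 2 * powLog (α + 1) β (1 / 2) ^ 2),
    div_pos two_pos (mul_pos (pow_pos (by linarith) 2) (pow_pos hc 2)), fun r t hr hrt ht => ?_⟩
  obtain ⟨hφ0, hφ1⟩ := mobius_mem_Ico hr hrt ht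
  have hr1 : r < 1 := hrt.trans_lt ht
  rw [hωh_eq _ hφ1.le, hωh_eq r hr1.le, hωh_eq t ht.le]
  exact integral_powLog_mul_integral_powLog_le hα hβ (by linarith) (by linarith)
    (by linarith) (by linarith) (by linarith) (by linarith) (one_sub_mobius_mul_le hr hrt ht)
end
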